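/- arXiv:2110.09190 — 2 statements merged into one kernel-verified Lean document; each statement's English description precedes it below -/
import Mathlib

section
/- For the star graph S_n = K_{1,n−1} with n ≥ 2 vertices, the secure domination number of its 2-subdivision equals n, i.e., γ_s(S_n^{1/2}) = n. -/
open SimpleGraph

/-- `D` is a dominating set of the simple graph `H`. -/
def Dominates {W : Type*} (H : SimpleGraph W) (D : Set W) : Prop :=
  ∀ v ∉ D, ∃ u ∈ D, H.Adj u v

/-- `D` is a secure dominating set of `H`: it is dominating, and every vertex outside `D`
has a neighbour `v ∈ D` whose swap keeps the set dominating. -/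
def SecureDominates {W : Type*} (H : SimpleGraph W) (D : Set W) : Prop :=
  Dominates H D ∧ ∀ u ∉ D, ∃ v ∈ D, H.Adj u v ∧ Dominates H ((D \ {v}) ∪ {u})

/-- The domination number `γ(H)`. -/
noncomputable def domNum {W : Type*} (H : SimpleGraph W) : ℕ :=
  sInf {n | ∃ D : Set W, Dominates H D ∧ D.ncard = n}

/-- The secure domination number `γₛ(H)`. -/
noncomputable def secDomNum {W : Type*} (H : SimpleGraph W) : ℕ :=
  sInf {n | ∃ D : Set W, SecureDominates H D ∧ D.ncard = n}

/-- The edges of `G`, oriented from smaller to larger endpoint. -/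
abbrev OEdge {V : Type*} (G : SimpleGraph V) [LinearOrder V] : Type _ :=
  {p : V × V // G.Adj p.1 p.2 ∧ p.1 < p.2}

/-- The `k`-subdivision `G^{1/k}` (for `k ≥ 2`): each edge `uv` (with `u < v`) is replaced by the
path `u, x₁, …, x_{k-1}, v` of length `k`, the `x_i` being new internal vertices. -/
def Subdiv {V : Type*} (G : SimpleGraph V) [LinearOrder V] (k : ℕ) :
    SimpleGraph (V ⊕ (OEdge G × Fin (k - 1))) :=
  SimpleGraph.fromRel (fun a b =>
    match a, b with
    | Sum.inl u, Sum.inr ⟨e, i⟩ => (i.val = 0 ∧ u = e.val.1) ∨ (i.val = k - 2 ∧ u = e.val.2)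
    | Sum.inr ⟨e, i⟩, Sum.inr ⟨f, j⟩ => e = f ∧ i.val + 1 = j.val
    | _, _ => False)

/-- The star graph `K_{1,n-1}` on `Fin n`, with centre `0`. -/
def starGraph (n : ℕ) : SimpleGraph (Fin n) :=
  SimpleGraph.fromRel (fun a _ => a.val = 0)

/-- `G` is a star graph: some centre is adjacent to exactly the other vertices, and there
are no other edges. -/
def IsStar {V : Type*} (G : SimpleGraph V) : Prop :=
  ∃ c : V, ∀ u v : V, G.Adj u v ↔ (u ≠ v ∧ (u = c ∨ v = c))


/-! The original vertices form a secure dominating set of every 2-subdivision: a subdivision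
vertex of an edge `e` swaps with the endpoint `e.2`. Conversely, in the subdivided star each leaf
or its unique neighbour lies in `D`, so projecting every subdivision vertex to its leaf maps `D`
onto all leaves. If the centre is not in `D`, the vertex defending it is the neighbour of some
leaf, which after the swap can only be dominated from inside `D`; then `D` contains that leaf
together with its neighbour, and the projection is not injective on `D`. -/

section Domination

variable {W : Type*} {H : SimpleGraph W} {D : Set W}

lemma secureDominates_univ (H : SimpleGraph W) : SecureDominates H Set.univ :=
  ⟨fun _ h => absurd (Set.mem_univ _) h, fun _ h => absurd (Set.mem_univ _) h⟩

lemma exists_secureDominates_ncard_eq_secDomNum (H : SimpleGraph W) :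
    ∃ D, SecureDominates H D ∧ D.ncard = secDomNum H :=
  Nat.sInf_mem (s := {k | ∃ D, SecureDominates H D ∧ D.ncard = k})
    ⟨_, _, secureDominates_univ H, rfl⟩

lemma secDomNum_le_ncard (hD : SecureDominates H D) : secDomNum H ≤ D.ncard :=
  Nat.sInf_le ⟨D, hD, rfl⟩

lemma Dominates.mem_or_mem_of_forall_adj_iff (hD : Dominates H D) {ℓ m : W}
    (hℓ : ∀ x, H.Adj x ℓ ↔ x = m) : ℓ ∈ D ∨ m ∈ D := by
  by_contra! h
  obtain ⟨x, hxD, hx⟩ := hD ℓ h.1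
  exact h.2 ((hℓ x).1 hx ▸ hxD)

lemma Dominates.mem_of_swap {u m ℓ : W} (hD : Dominates H ((D \ {m}) ∪ {u})) (hum : H.Adj u m)
    (hℓ : ∀ x, H.Adj x ℓ ↔ x = m) (hℓu : ℓ ≠ u) : ℓ ∈ D := by
  rcases hD.mem_or_mem_of_forall_adj_iff hℓ with (⟨hℓD, -⟩ | hℓu') | (⟨-, hm⟩ | hmu)
  · exact hℓD
  · exact absurd hℓu' hℓu
  · exact absurd rfl hm
  · exact absurd rfl (hmu ▸ hum).ne

end Domination

namespace Subdiv

variable {V : Type*} [LinearOrder V] {G : SimpleGraph V}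

lemma two_adj_inl_inr {u : V} {e : OEdge G} {i : Fin 1} :
    (Subdiv G 2).Adj (.inl u) (.inr (e, i)) ↔ u = e.val.1 ∨ u = e.val.2 := by
  simp [Subdiv, SimpleGraph.fromRel_adj]

lemma two_not_adj_inl_inl (u v : V) : ¬ (Subdiv G 2).Adj (.inl u) (.inl v) := by
  simp [Subdiv, SimpleGraph.fromRel_adj]

lemma secureDominates_two_range_inl (G : SimpleGraph V) :
    SecureDominates (Subdiv G 2) (Set.range Sum.inl) := by
  refine ⟨?_, ?_⟩
  · rintro (u | ⟨e, i⟩) hx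
    · exact absurd ⟨u, rfl⟩ hx
    · exact ⟨.inl e.val.1, ⟨_, rfl⟩, two_adj_inl_inr.2 (.inl rfl)⟩
  · rintro (u | ⟨e, i⟩) hx
    · exact absurd ⟨u, rfl⟩ hx
    refine ⟨.inl e.val.2, ⟨_, rfl⟩, (two_adj_inl_inr.2 (.inr rfl)).symm, ?_⟩
    rintro (w | ⟨f, j⟩) hy
    · obtain rfl : w = e.val.2 := by
        by_contra hw
        exact hy (.inl ⟨⟨w, rfl⟩, by simpa using hw⟩)
      exact ⟨.inr (e, i), .inr rfl, (two_adj_inl_inr.2 (.inr rfl)).symm⟩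
    · have hf : f.val.1 ≠ e.val.2 ∨ f.val.2 ≠ e.val.2 := by
        by_contra! h
        exact f.prop.2.ne (h.1.trans h.2.symm)
      rcases hf with hf | hf
      · exact ⟨.inl f.val.1, .inl ⟨⟨_, rfl⟩, by simpa using hf⟩, two_adj_inl_inr.2 (.inl rfl)⟩
      · exact ⟨.inl f.val.2, .inl ⟨⟨_, rfl⟩, by simpa using hf⟩, two_adj_inl_inr.2 (.inr rfl)⟩

end Subdiv

section Star

variable {n : ℕ} [NeZero n]

lemma starGraph_adj_iff {a b : Fin n} :
    (_root_.starGraph n).Adj a b ↔ a ≠ b ∧ (a = 0 ∨ b = 0) := by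
  simp [_root_.starGraph, Fin.val_eq_zero_iff]

lemma OEdge.starGraph_fst_eq_zero (e : OEdge (_root_.starGraph n)) : e.val.1 = 0 := by
  obtain ⟨⟨a, b⟩, hab, hlt⟩ := e
  rcases (starGraph_adj_iff.1 hab).2 with rfl | rfl
  · rfl
  · exact absurd hlt (Fin.not_lt_zero a)

lemma OEdge.starGraph_snd_ne_zero (e : OEdge (_root_.starGraph n)) : e.val.2 ≠ 0 :=
  e.starGraph_fst_eq_zero ▸ e.prop.2.ne'

def starEdge (v : Fin n) (hv : v ≠ 0) : OEdge (_root_.starGraph n) :=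
  ⟨(0, v), starGraph_adj_iff.2 ⟨hv.symm, .inl rfl⟩, Fin.pos_iff_ne_zero.2 hv⟩

lemma OEdge.eq_starEdge (e : OEdge (_root_.starGraph n)) :
    e = starEdge e.val.2 e.starGraph_snd_ne_zero :=
  Subtype.ext (Prod.ext e.starGraph_fst_eq_zero rfl)

lemma starGraph_subdiv_two_adj_inl_iff {v : Fin n} (hv : v ≠ 0)
    (x : Fin n ⊕ (OEdge (_root_.starGraph n) × Fin 1)) :
    (Subdiv (_root_.starGraph n) 2).Adj x (.inl v) ↔ x = .inr (starEdge v hv, 0) := by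
  rcases x with u | ⟨e, i⟩
  · simpa using Subdiv.two_not_adj_inl_inl u v
  rw [SimpleGraph.adj_comm, Subdiv.two_adj_inl_inr, e.starGraph_fst_eq_zero, or_iff_right hv]
  constructor
  · rintro rfl
    rw [Subsingleton.elim i 0, ← e.eq_starEdge]
  · rintro ⟨⟩
    rfl

lemma SecureDominates.starGraph_subdiv_two_exists_pair
    {D : Set (Fin n ⊕ (OEdge (_root_.starGraph n) × Fin 1))}
    (hD : SecureDominates (Subdiv (_root_.starGraph n) 2) D) (h0 : .inl 0 ∉ D) :
    ∃ w, ∃ hw : w ≠ 0, .inl w ∈ D ∧ .inr (starEdge w hw, 0) ∈ D := by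
  obtain ⟨x, hxD, hx, hswap⟩ := hD.2 _ h0
  rcases x with u | ⟨e, i⟩
  · exact absurd hx (Subdiv.two_not_adj_inl_inl _ _)
  have hw := e.starGraph_snd_ne_zero
  have hx_eq : (.inr (e, i) : Fin n ⊕ _) = .inr (starEdge e.val.2 hw, 0) := by
    rw [Subsingleton.elim (α := Fin 1) i 0, ← e.eq_starEdge]
  refine ⟨e.val.2, hw, hswap.mem_of_swap hx ?_ (by simpa using hw), hx_eq ▸ hxD⟩
  simpa only [hx_eq] using starGraph_subdiv_two_adj_inl_iff hw

end Star

def starSubdivProj (n : ℕ) : Fin n ⊕ (OEdge (_root_.starGraph n) × Fin 1) → Fin n :=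
  Sum.elim id fun x => x.1.val.2

lemma le_ncard_of_secureDominates_starGraph_subdiv_two {n : ℕ}
    {D : Set (Fin n ⊕ (OEdge (_root_.starGraph n) × Fin 1))}
    (hD : SecureDominates (Subdiv (_root_.starGraph n) 2) D) : n ≤ D.ncard := by
  obtain rfl | hn := n.eq_zero_or_pos
  · exact Nat.zero_le _
  have : NeZero n := ⟨hn.ne'⟩
  set π := starSubdivProj n
  have hleaves : {0}ᶜ ⊆ π '' D := fun v hv => by
    rcases hD.1.mem_or_mem_of_forall_adj_iff (starGraph_subdiv_two_adj_inl_iff hv) with h | h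
    exacts [⟨_, h, rfl⟩, ⟨_, h, rfl⟩]
  by_cases h0 : .inl 0 ∈ D
  · have hall : Set.univ ⊆ π '' D := fun v _ => by
      by_cases hv : v = 0
      exacts [⟨_, hv ▸ h0, rfl⟩, hleaves hv]
    calc n = (Set.univ : Set (Fin n)).ncard := by simp
      _ ≤ (π '' D).ncard := Set.ncard_le_ncard hall
      _ ≤ D.ncard := Set.ncard_image_le
  · obtain ⟨w, hw, hwD, hmD⟩ := hD.starGraph_subdiv_two_exists_pair h0
    have hnotinj : ¬ Set.InjOn π D := fun hinj => by simpa using hinj hwD hmD rfl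
    have hlt : (π '' D).ncard < D.ncard :=
      lt_of_le_of_ne Set.ncard_image_le (mt (Set.ncard_image_iff D.toFinite).1 hnotinj)
    have hcompl : n - 1 ≤ (π '' D).ncard :=
      calc n - 1 = ({0}ᶜ : Set (Fin n)).ncard := by
            rw [Set.ncard_compl, Set.ncard_singleton, Nat.card_fin]
        _ ≤ (π '' D).ncard := Set.ncard_le_ncard hleaves
    omega

theorem stmt_3_general (n : ℕ) :
    secDomNum (Subdiv (_root_.starGraph n) 2) = n := by
  obtain ⟨D, hD, hcard⟩ :=
    exists_secureDominates_ncard_eq_secDomNum (Subdiv (_root_.starGraph n) 2)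
  refine le_antisymm ?_ (hcard ▸ le_ncard_of_secureDominates_starGraph_subdiv_two hD)
  calc secDomNum (Subdiv (_root_.starGraph n) 2)
      ≤ (Set.range (Sum.inl : Fin n → _)).ncard :=
        secDomNum_le_ncard (Subdiv.secureDominates_two_range_inl _)
    _ = n := by rw [Set.ncard_range_of_injective Sum.inl_injective, Nat.card_fin]

/-- For the star `Sₙ = K_{1,n-1}` with `n ≥ 2` vertices, `γₛ(Sₙ^{1/2}) = n`. -/
theorem stmt_3 (n : ℕ) (hn : 2 ≤ n) :
    secDomNum (Subdiv (_root_.starGraph n) 2) = n :=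
  stmt_3_general n
end

section
/- For every star graph S_n = K_{1,n−1} with n ≥ 2, γ_s(S_n^{1/5}) = 3|E(S_n)| − Δ(S_n) + 1 = 3(n−1) − (n−1) + 1 = 2(n−1) + 1. -/
open SimpleGraph

/-! In `Sₙ^{1/5}` write the leg of the edge `e` from the centre `c` to the leaf `v` as
`c, x₀, x₁, x₂, x₃, v`, where `xᵢ` is `Sum.inr (e, i)`. A dominating set `D` meets
`{x₀, x₁, x₂}` (to dominate `x₁`) and `{x₃, v}` (to dominate `v`) on every leg. If `D` is secure
and misses `c`, then `c` is defended by some `x₀`, and `x₁` must stay dominated after the swap,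
so `D` meets `{x₀, x₁, x₂}` of that leg twice. Either way `|D| ≥ 2(n - 1) + 1`, and the vertices
of `Sₙ` together with every `x₁` form a secure dominating set of that size. -/

lemma Set.natCard_add_one_le_ncard_of_forall_some_mem_image {α κ : Type*} [Finite κ] {s : Set α}
    (hs : s.Finite) {f : α → Option κ} (hsome : ∀ k, some k ∈ f '' s)
    (hextra : none ∈ f '' s ∨ ¬ Set.InjOn f s) : Nat.card κ + 1 ≤ s.ncard := by
  rcases hextra with hnone | hninj
  · have huniv : f '' s = Set.univ := Set.eq_univ_of_forall fun o => by
      cases o with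
      | none => exact hnone
      | some k => exact hsome k
    calc Nat.card κ + 1 = (f '' s).ncard := by
          rw [huniv, Set.ncard_univ, Finite.card_option]
      _ ≤ s.ncard := Set.ncard_image_le hs
  · calc Nat.card κ + 1 = (Set.range (some : κ → Option κ)).ncard + 1 := by
          rw [Set.ncard_range_of_injective (Option.some_injective κ)]
      _ ≤ (f '' s).ncard + 1 := by
          grw [Set.ncard_le_ncard (Set.range_subset_iff.mpr hsome) (hs.image f)]
      _ ≤ s.ncard :=
        Nat.lt_of_le_of_ne (Set.ncard_image_le hs) (mt (Set.ncard_image_iff hs).mp hninj)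

lemma Dominates.sdiff_union_singleton {W : Type*} {H : SimpleGraph W} {D : Set W} {u v : W}
    (hD : Dominates H D)
    (hv : ∀ x ∉ (D \ {v}) ∪ {u}, (x = v ∨ H.Adj v x) → ∃ w ∈ (D \ {v}) ∪ {u}, H.Adj w x) :
    Dominates H ((D \ {v}) ∪ {u}) := by
  intro x hx
  by_cases hxv : x = v ∨ H.Adj v x
  · exact hv x hx hxv
  push Not at hxv
  obtain ⟨w, hw, hwx⟩ := hD x fun hxD => hx (Or.inl ⟨hxD, hxv.1⟩)
  exact ⟨w, Or.inl ⟨hw, fun hwv => hxv.2 (hwv ▸ hwx)⟩, hwx⟩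

namespace Subdiv

variable {V : Type*} [LinearOrder V] {G : SimpleGraph V} {k : ℕ}

lemma adj_inl_inr {u : V} {e : OEdge G} {i : Fin (k - 1)} :
    (Subdiv G k).Adj (.inl u) (.inr (e, i)) ↔
      (i.val = 0 ∧ u = e.val.1) ∨ (i.val = k - 2 ∧ u = e.val.2) := by
  simp [Subdiv]

lemma not_adj_inl_inl {u v : V} : ¬ (Subdiv G k).Adj (.inl u) (.inl v) := by
  simp [Subdiv]

lemma adj_inr_inr {e f : OEdge G} {i j : Fin (k - 1)} :
    (Subdiv G k).Adj (.inr (e, i)) (.inr (f, j)) ↔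
      e = f ∧ (i.val + 1 = j.val ∨ j.val + 1 = i.val) := by
  simp only [Subdiv, SimpleGraph.fromRel_adj, ne_eq, Sum.inr.injEq, Prod.mk.injEq]
  constructor
  · rintro ⟨-, ⟨rfl, h⟩ | ⟨rfl, h⟩⟩ <;> simp [h]
  · rintro ⟨rfl, h | h⟩
    · exact ⟨fun h' => by omega, Or.inl ⟨rfl, h⟩⟩
    · exact ⟨fun h' => by omega, Or.inr ⟨rfl, h⟩⟩

end Subdiv

namespace StarSubdiv

abbrev Edge (n : ℕ) := OEdge (_root_.starGraph n)

abbrev graph (n : ℕ) : SimpleGraph (Fin n ⊕ (Edge n × Fin 4)) := Subdiv (_root_.starGraph n) 5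

variable {n : ℕ}

lemma starGraph_adj {a b : Fin n} :
    (_root_.starGraph n).Adj a b ↔ a ≠ b ∧ (a.val = 0 ∨ b.val = 0) := by
  simp [_root_.starGraph]

namespace Edge

lemma fst_val (e : Edge n) : e.val.1.val = 0 := by
  obtain ⟨⟨a, b⟩, hadj, hlt⟩ := e
  rw [starGraph_adj] at hadj
  rw [Fin.lt_def] at hlt
  simp only at hadj hlt ⊢
  omega

lemma snd_val_ne_zero (e : Edge n) : e.val.2.val ≠ 0 := by
  have := e.prop.2
  rw [Fin.lt_def] at this
  omega

lemma ext_snd {e f : Edge n} (h : e.val.2 = f.val.2) : e = f :=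
  Subtype.ext (Prod.ext (Fin.ext (by rw [fst_val, fst_val])) h)

def ofLeaf (v : Fin n) (hv : v.val ≠ 0) : Edge n :=
  ⟨(⟨0, Fin.pos v⟩, v), starGraph_adj.mpr ⟨fun h => hv (congrArg Fin.val h).symm, Or.inl rfl⟩,
    Fin.lt_def.mpr (Nat.pos_of_ne_zero hv)⟩

def equivLeaf : Edge n ≃ {v : Fin n // v.val ≠ 0} where
  toFun e := ⟨e.val.2, snd_val_ne_zero e⟩
  invFun v := ofLeaf v.1 v.2
  left_inv _ := ext_snd rfl
  right_inv _ := rfl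

lemma natCard : Nat.card (Edge n) = n - 1 := by
  rw [Nat.card_congr equivLeaf]
  cases n with
  | zero => simp
  | succ m =>
    have h : ∀ v : Fin (m + 1), v.val ≠ 0 ↔ v ≠ 0 := fun v => Fin.val_eq_zero_iff.not
    rw [Nat.card_congr (Equiv.subtypeEquivRight h)]
    simp

end Edge

lemma adj_inl_inr {u : Fin n} {e : Edge n} {i : Fin 4} :
    (graph n).Adj (.inl u) (.inr (e, i)) ↔ (i = 0 ∧ u = e.val.1) ∨ (i = 3 ∧ u = e.val.2) := by
  have h0 : i.val = 0 ↔ i = 0 := by omega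
  have h3 : i.val = 5 - 2 ↔ i = 3 := by omega
  rw [Subdiv.adj_inl_inr, h0, h3]

lemma adj_inr_inr {e f : Edge n} {i j : Fin 4} :
    (graph n).Adj (.inr (e, i)) (.inr (f, j)) ↔
      e = f ∧ (i.val + 1 = j.val ∨ j.val + 1 = i.val) :=
  Subdiv.adj_inr_inr

lemma adj_center_iff {c : Fin n} (hc : c.val = 0) {x : Fin n ⊕ (Edge n × Fin 4)} :
    (graph n).Adj (.inl c) x ↔ ∃ e, x = .inr (e, 0) := by
  rcases x with v | ⟨e, i⟩
  · simpa using Subdiv.not_adj_inl_inl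
  · obtain rfl : c = e.val.1 := Fin.ext (by rw [hc, e.fst_val])
    have h : e.val.1 ≠ e.val.2 := fun h => e.snd_val_ne_zero (h ▸ hc)
    simp [adj_inl_inr, h]

lemma adj_leaf_iff (e : Edge n) {x : Fin n ⊕ (Edge n × Fin 4)} :
    (graph n).Adj (.inl e.val.2) x ↔ x = .inr (e, 3) := by
  rcases x with v | ⟨f, i⟩
  · simpa using Subdiv.not_adj_inl_inl
  · have h1 : e.val.2 ≠ f.val.1 := fun h => e.snd_val_ne_zero (h ▸ f.fst_val)
    have h2 : e.val.2 = f.val.2 ↔ f = e := ⟨fun h => Edge.ext_snd h.symm, fun h => h ▸ rfl⟩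
    simp [adj_inl_inr, h1, h2, and_comm]

lemma adj_inr_one_iff (e : Edge n) {x : Fin n ⊕ (Edge n × Fin 4)} :
    (graph n).Adj x (.inr (e, 1)) ↔ x = .inr (e, 0) ∨ x = .inr (e, 2) := by
  rcases x with v | ⟨f, i⟩
  · simp [adj_inl_inr]
  · by_cases hfe : f = e
    · simp only [adj_inr_inr, hfe, true_and, Sum.inr.injEq, Prod.mk.injEq]
      omega
    · simp [adj_inr_inr, hfe]

variable {D : Set (Fin n ⊕ (Edge n × Fin 4))}

lemma leaf_mem_or_of_dominates (hD : Dominates (graph n) D) (e : Edge n) :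
    .inl e.val.2 ∈ D ∨ .inr (e, 3) ∈ D := by
  by_contra! h
  obtain ⟨u, hu, hadj⟩ := hD _ h.1
  rw [(graph n).adj_comm, adj_leaf_iff] at hadj
  exact h.2 (hadj ▸ hu)

lemma inr_one_mem_or_of_dominates (hD : Dominates (graph n) D) (e : Edge n) :
    .inr (e, 1) ∈ D ∨ .inr (e, 0) ∈ D ∨ .inr (e, 2) ∈ D := by
  by_cases h : .inr (e, 1) ∈ D
  · exact Or.inl h
  obtain ⟨u, hu, hadj⟩ := hD _ h
  rcases (adj_inr_one_iff e).mp hadj with rfl | rfl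
  exacts [Or.inr (Or.inl hu), Or.inr (Or.inr hu)]

def origWithInrOne (n : ℕ) : Set (Fin n ⊕ (Edge n × Fin 4)) :=
  Set.range .inl ∪ Set.range fun e => .inr (e, 1)

@[simp] lemma inl_mem_origWithInrOne (v : Fin n) : .inl v ∈ origWithInrOne n := Or.inl ⟨v, rfl⟩

@[simp] lemma inr_mem_origWithInrOne {e : Edge n} {i : Fin 4} :
    .inr (e, i) ∈ origWithInrOne n ↔ i = 1 := by
  simp [origWithInrOne, eq_comm]

lemma ncard_origWithInrOne (hn : 0 < n) : (origWithInrOne n).ncard = 2 * (n - 1) + 1 := by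
  rw [origWithInrOne, Set.ncard_union_eq]
  · rw [Set.ncard_range_of_injective Sum.inl_injective,
      Set.ncard_range_of_injective fun e f h => by simpa using h, Nat.card_fin, Edge.natCard]
    omega
  · rw [Set.disjoint_left]
    rintro _ ⟨v, rfl⟩ ⟨e, he⟩
    simp at he

lemma dominates_origWithInrOne : Dominates (graph n) (origWithInrOne n) := by
  rintro (v | ⟨e, i⟩) hx
  · exact absurd (inl_mem_origWithInrOne v) hx
  have hi : i = 0 ∨ i = 2 ∨ i = 3 := by simp at hx; omega
  rcases hi with rfl | rfl | rfl
  · exact ⟨.inr (e, 1), by simp, adj_inr_inr.mpr ⟨rfl, Or.inr rfl⟩⟩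
  · exact ⟨.inr (e, 1), by simp, adj_inr_inr.mpr ⟨rfl, Or.inl rfl⟩⟩
  · exact ⟨.inl e.val.2, by simp, (adj_leaf_iff e).mpr rfl⟩

lemma dominates_swap_center (e : Edge n) :
    Dominates (graph n) ((origWithInrOne n \ {.inl e.val.1}) ∪ {.inr (e, 0)}) := by
  refine dominates_origWithInrOne.sdiff_union_singleton fun x _ hxv => ?_
  rcases hxv with rfl | hadj
  · exact ⟨.inr (e, 0), Or.inr rfl, ((adj_center_iff e.fst_val).mpr ⟨e, rfl⟩).symm⟩
  · obtain ⟨f, rfl⟩ := (adj_center_iff e.fst_val).mp hadj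
    exact ⟨.inr (f, 1), Or.inl ⟨by simp, by simp⟩, adj_inr_inr.mpr ⟨rfl, Or.inr rfl⟩⟩

lemma dominates_swap_inr_one (e : Edge n) :
    Dominates (graph n) ((origWithInrOne n \ {.inr (e, 1)}) ∪ {.inr (e, 2)}) := by
  refine dominates_origWithInrOne.sdiff_union_singleton fun x hx hxv => ?_
  rcases hxv with rfl | hadj
  · exact ⟨.inr (e, 2), Or.inr rfl, adj_inr_inr.mpr ⟨rfl, Or.inr rfl⟩⟩
  · rcases (adj_inr_one_iff e).mp hadj.symm with rfl | rfl
    · exact ⟨.inl e.val.1, Or.inl ⟨by simp, by simp⟩, adj_inl_inr.mpr (Or.inl ⟨rfl, rfl⟩)⟩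
    · exact absurd (Or.inr rfl) hx

lemma dominates_swap_leaf (e : Edge n) :
    Dominates (graph n) ((origWithInrOne n \ {.inl e.val.2}) ∪ {.inr (e, 3)}) := by
  refine dominates_origWithInrOne.sdiff_union_singleton fun x hx hxv => ?_
  rcases hxv with rfl | hadj
  · exact ⟨.inr (e, 3), Or.inr rfl, ((adj_leaf_iff e).mpr rfl).symm⟩
  · rw [adj_leaf_iff] at hadj
    exact absurd (Or.inr hadj) hx

lemma secureDominates_origWithInrOne : SecureDominates (graph n) (origWithInrOne n) := by
  refine ⟨dominates_origWithInrOne, ?_⟩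
  rintro (v | ⟨e, i⟩) hx
  · exact absurd (inl_mem_origWithInrOne v) hx
  have hi : i = 0 ∨ i = 2 ∨ i = 3 := by simp at hx; omega
  rcases hi with rfl | rfl | rfl
  · exact ⟨.inl e.val.1, by simp, adj_inl_inr.mpr (Or.inl ⟨rfl, rfl⟩) |>.symm,
      dominates_swap_center e⟩
  · exact ⟨.inr (e, 1), by simp, adj_inr_inr.mpr ⟨rfl, Or.inr rfl⟩, dominates_swap_inr_one e⟩
  · exact ⟨.inl e.val.2, by simp, ((adj_leaf_iff e).mpr rfl).symm, dominates_swap_leaf e⟩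

-- `none` is the centre; on the leg `e`, `(e, false)` is `{x₀, x₁, x₂}`, `(e, true)` is `{x₃, v}`.
def block : Fin n ⊕ (Edge n × Fin 4) → Option (Edge n × Bool)
  | .inl v => if hv : v.val = 0 then none else some (Edge.ofLeaf v hv, true)
  | .inr (e, i) => some (e, i = 3)

lemma block_leaf (e : Edge n) : block (.inl e.val.2) = some (e, true) := by
  rw [block, dif_neg e.snd_val_ne_zero]
  exact congrArg (fun f => some (f, true)) (Edge.ext_snd rfl)

lemma some_mem_image_block (hD : Dominates (graph n) D) (k : Edge n × Bool) :
    some k ∈ block '' D := by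
  obtain ⟨e, _ | _⟩ := k
  · rcases inr_one_mem_or_of_dominates hD e with h | h | h <;> exact ⟨_, h, rfl⟩
  · rcases leaf_mem_or_of_dominates hD e with h | h
    exacts [⟨_, h, block_leaf e⟩, ⟨_, h, rfl⟩]

lemma none_mem_image_block_or_not_injOn (hn : 0 < n) (hD : SecureDominates (graph n) D) :
    none ∈ block '' D ∨ ¬ Set.InjOn block D := by
  set c : Fin n := ⟨0, hn⟩
  by_cases hc : .inl c ∈ D
  · exact Or.inl ⟨_, hc, by simp [block, c]⟩
  obtain ⟨v, hv, hadj, hswap⟩ := hD.2 _ hc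
  obtain ⟨f, rfl⟩ := (adj_center_iff rfl).mp hadj
  have hf : .inr (f, 1) ∈ D ∨ .inr (f, 2) ∈ D := by
    rcases inr_one_mem_or_of_dominates hswap f with h | h | h <;> simp at h
    exacts [Or.inl h, Or.inr h]
  refine Or.inr fun hinj => ?_
  rcases hf with h | h <;> exact absurd (hinj hv h rfl) (by simp)

lemma le_ncard_of_secureDominates (hn : 0 < n) (hD : SecureDominates (graph n) D) :
    2 * (n - 1) + 1 ≤ D.ncard := by
  have := Set.natCard_add_one_le_ncard_of_forall_some_mem_image (Set.toFinite D)
    (some_mem_image_block hD.1) (none_mem_image_block_or_not_injOn hn hD)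
  rwa [Nat.card_prod, Edge.natCard, Nat.card_eq_fintype_card (α := Bool), Fintype.card_bool,
    mul_comm] at this

end StarSubdiv

/-- For every star `Sₙ = K_{1,n-1}` with `n ≥ 2`,
`γₛ(Sₙ^{1/5}) = 3(n-1) - (n-1) + 1 = 2(n-1) + 1`. -/
theorem stmt_12 (n : ℕ) (hn : 2 ≤ n) :
    secDomNum (Subdiv (_root_.starGraph n) 5) = 2 * (n - 1) + 1 := by
  have hn' : 0 < n := by omega
  have hstd : 2 * (n - 1) + 1 ∈
      {m | ∃ D, SecureDominates (StarSubdiv.graph n) D ∧ D.ncard = m} :=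
    ⟨StarSubdiv.origWithInrOne n, StarSubdiv.secureDominates_origWithInrOne,
      StarSubdiv.ncard_origWithInrOne hn'⟩
  refine le_antisymm (Nat.sInf_le hstd) (le_csInf ⟨_, hstd⟩ ?_)
  rintro m ⟨D, hD, rfl⟩
  exact StarSubdiv.le_ncard_of_secureDominates hn' hD
end
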